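/- arXiv:2011.12900 — 4 statements merged into one kernel-verified Lean document; each statement's English description precedes it below -/
import Mathlib

section
/- Let V be a finite-dimensional real vector space. For every subset E of V that generates a dense additive subgroup of V, for every δ > 0, and for every basis B of V with B ⊆ E, there exists a finite subset F ⊆ E with at most 2·dim V elements such that the additive subgroup generated by B ∪ F is δ-dense in V (i.e., every point of V is within distance δ of some element of this subgroup). -/
/-!
Induct on `dim V`, carrying a subgroup `G` that is `R`-dense for some `R` (at the start the
`ℤ`-span of the basis). If `G` is dense, `F = ∅` will do. Otherwise some `e ∈ E` makes `G + ℤe`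
contain a nonzero vector `x` of norm `< δ/4`: if not, a pigeonhole argument in the ball of
radius `R` yields one `N` with `N! • e ∈ G` for all `e ∈ E`, so `G ⊇ N! • ⟨G ∪ E⟩` would be dense.
In `V ⧸ ℝx`, of dimension one less, induction gives `F' ⊆ E` with `G + ℤe + ⟨F'⟩` being
`δ/2`-dense modulo `ℝx`; integer multiples of `x` then correct the remaining component. This even
gives `F` with at most `dim V` elements.
-/

open Module Set Metric Function

/-- The paper's "`r`-dense in `V`". -/
def IsDenseUpTo {V : Type*} [SeminormedAddCommGroup V] (r : ℝ) (S : Set V) : Prop :=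
  ∀ v : V, ∃ x ∈ S, ‖v - x‖ ≤ r

lemma AddSubgroup.dense_of_nsmul_mem {V : Type*} [AddCommGroup V] [Module ℝ V]
    [TopologicalSpace V] [ContinuousConstSMul ℝ V] {G H : AddSubgroup V}
    (hH : Dense (H : Set V)) {M : ℕ} (hM : M ≠ 0) (hHG : ∀ h ∈ H, M • h ∈ G) :
    Dense (G : Set V) := by
  let φ : V ≃ₜ V := Homeomorph.smulOfNeZero (M : ℝ) (Nat.cast_ne_zero.2 hM)
  refine (φ.surjective.denseRange.dense_image φ.continuous hH).mono ?_
  rintro _ ⟨h, hh, rfl⟩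
  simpa [φ, Nat.cast_smul_eq_nsmul] using hHG h hh

lemma AddSubgroup.dense_map_sup_closure_image {V W : Type*} [AddGroup V] [AddGroup W]
    [TopologicalSpace V] [TopologicalSpace W] {f : V →+ W} (hf : Surjective f)
    (hf_cont : Continuous f) {G : AddSubgroup V} {E : Set V}
    (hE : Dense ((G ⊔ closure E : AddSubgroup V) : Set V)) :
    Dense ((G.map f ⊔ closure (f '' E) : AddSubgroup W) : Set W) := by
  rw [← AddMonoidHom.map_closure, ← map_sup, coe_map]
  exact hf.denseRange.dense_image hf_cont hE

section Seminormed

variable {V : Type*} [SeminormedAddCommGroup V]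

lemma IsDenseUpTo.mono {r s : ℝ} {S T : Set V} (h : IsDenseUpTo r S) (hrs : r ≤ s)
    (hST : S ⊆ T) : IsDenseUpTo s T := fun v ↦
  let ⟨x, hxS, hx⟩ := h v
  ⟨x, hST hxS, hx.trans hrs⟩

lemma IsDenseUpTo.image {W F : Type*} [SeminormedAddCommGroup W] [FunLike F V W]
    [AddMonoidHomClass F V W] {f : F} (hf : Surjective f) (hf_le : ∀ v, ‖f v‖ ≤ ‖v‖)
    {r : ℝ} {S : Set V} (h : IsDenseUpTo r S) : IsDenseUpTo r (f '' S) := by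
  intro w
  obtain ⟨v, rfl⟩ := hf w
  obtain ⟨x, hxS, hx⟩ := h v
  exact ⟨f x, mem_image_of_mem f hxS, by simpa only [map_sub] using (hf_le (v - x)).trans hx⟩

lemma Dense.isDenseUpTo {S : Set V} (hS : Dense S) {r : ℝ} (hr : 0 < r) : IsDenseUpTo r S :=
  fun v ↦
  let ⟨x, hx, hxS⟩ := Metric.dense_iff.1 hS v r hr
  ⟨x, hxS, (dist_eq_norm v x ▸ mem_ball'.1 hx).le⟩

lemma norm_fract_smul_le [NormedSpace ℝ V] (t : ℝ) (x : V) : ‖Int.fract t • x‖ ≤ ‖x‖ := by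
  rw [_root_.norm_smul, Real.norm_of_nonneg (Int.fract_nonneg t)]
  exact mul_le_of_le_one_left (norm_nonneg x) (Int.fract_lt_one t).le

lemma Module.Basis.isDenseUpTo_closure_range {ι : Type*} [Fintype ι] [NormedSpace ℝ V]
    (b : Basis ι ℝ V) : IsDenseUpTo (∑ i, ‖b i‖) (AddSubgroup.closure (range b) : Set V) := by
  intro v
  refine ⟨∑ i, ⌊b.repr v i⌋ • b i, AddSubgroup.sum_mem _ fun i _ ↦
    AddSubgroup.zsmul_mem _ (AddSubgroup.subset_closure (mem_range_self i)) _, ?_⟩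
  have hfract : v - ∑ i, ⌊b.repr v i⌋ • b i = ∑ i, Int.fract (b.repr v i) • b i := by
    nth_rw 1 [← b.sum_repr v]
    rw [← Finset.sum_sub_distrib]
    refine Finset.sum_congr rfl fun i _ ↦ ?_
    rw [← Int.cast_smul_eq_zsmul ℝ, ← sub_smul, Int.self_sub_floor]
  rw [hfract]
  exact (norm_sum_le _ _).trans (Finset.sum_le_sum fun i _ ↦ norm_fract_smul_le _ _)

lemma AddSubgroup.exists_nsmul_mem_of_isDenseUpTo [ProperSpace V] {G : AddSubgroup V} {R : ℝ}
    (hG : IsDenseUpTo R (G : Set V)) {δ : ℝ} (hδ : 0 < δ) :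
    ∃ N : ℕ, ∀ e : V, (∀ x ∈ G ⊔ zmultiples e, ‖x‖ < δ → x = 0) →
      ∃ m : ℕ, 0 < m ∧ m ≤ N ∧ m • e ∈ G := by
  obtain ⟨t, htfin, hcover⟩ := totallyBounded_iff.1
    (isCompact_closedBall (0 : V) R).totallyBounded (δ / 2) (half_pos hδ)
  lift t to Finset V using htfin
  refine ⟨t.card, fun e he ↦ ?_⟩
  choose g hgG hg using fun k : ℕ ↦ hG (k • e)
  have hmem (k : ℕ) : k • e - g k ∈ G ⊔ zmultiples e :=
    sub_mem (mem_sup_right (nsmul_mem (mem_zmultiples e) k)) (mem_sup_left (hgG k))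
  have hball (k : ℕ) : ∃ c ∈ t, k • e - g k ∈ ball c (δ / 2) := by
    simpa using hcover (mem_closedBall_zero_iff.2 (hg k))
  choose c hct hc using hball
  obtain ⟨a, ha, b, hb, hab, hcab⟩ := Finset.exists_ne_map_eq_of_card_lt_of_maps_to
    (s := Finset.range (t.card + 1)) (by simp) fun k _ ↦ hct k
  wlog hba : b < a generalizing a b
  · exact this b hb a ha hab.symm hcab.symm (lt_of_le_of_ne (not_lt.1 hba) hab)
  have hdiff : (a - b : ℕ) • e = (a • e - g a) - (b • e - g b) + (g a - g b) := by
    rw [sub_nsmul _ hba.le]; abel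
  have hzero : (a • e - g a) - (b • e - g b) = 0 := by
    refine he _ (sub_mem (hmem a) (hmem b)) ?_
    rw [← dist_eq_norm]
    calc dist (a • e - g a) (b • e - g b)
        ≤ dist (a • e - g a) (c a) + dist (b • e - g b) (c b) := by
          rw [hcab]; exact dist_triangle_right _ _ _
      _ < δ / 2 + δ / 2 := add_lt_add (hc a) (hc b)
      _ = δ := add_halves δ
  refine ⟨a - b, Nat.sub_pos_of_lt hba, ?_, ?_⟩
  · have := Finset.mem_range.1 ha; omega
  · rw [hdiff, hzero, zero_add]
    exact G.sub_mem (hgG a) (hgG b)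

lemma AddSubgroup.exists_mem_sup_zmultiples_ne_zero_norm_lt [NormedSpace ℝ V] [ProperSpace V]
    {G : AddSubgroup V} {R : ℝ} (hG : IsDenseUpTo R (G : Set V)) (hGd : ¬ Dense (G : Set V))
    {E : Set V} (hE : Dense ((G ⊔ AddSubgroup.closure E : AddSubgroup V) : Set V)) {δ : ℝ}
    (hδ : 0 < δ) : ∃ e ∈ E, ∃ x ∈ G ⊔ zmultiples e, x ≠ 0 ∧ ‖x‖ < δ := by
  by_contra! hsep
  obtain ⟨N, hN⟩ := exists_nsmul_mem_of_isDenseUpTo hG hδ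
  refine hGd (dense_of_nsmul_mem hE N.factorial_ne_zero fun h hh ↦ ?_)
  have hle : G ⊔ AddSubgroup.closure E ≤ G.comap (nsmulAddMonoidHom N.factorial) := by
    refine sup_le (fun g hg ↦ nsmul_mem hg _) ((closure_le _).2 fun e he ↦ ?_)
    obtain ⟨m, hm0, hmN, hme⟩ := hN e fun x hx hxδ ↦ by
      by_contra hx0
      exact (hsep e he x hx hx0).not_gt hxδ
    obtain ⟨k, hk⟩ := Nat.dvd_factorial hm0 hmN
    show N.factorial • e ∈ G
    rw [hk, mul_nsmul]
    exact nsmul_mem hme k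
  exact hle hh

lemma IsDenseUpTo.of_image_mkQ_span_singleton [NormedSpace ℝ V] {H : AddSubgroup V} {x : V}
    (hx : x ∈ H) {r s : ℝ} (hrs : r < s) (hH : IsDenseUpTo r ((ℝ ∙ x).mkQ '' H)) :
    IsDenseUpTo (s + ‖x‖) (H : Set V) := by
  intro v
  obtain ⟨_, ⟨h, hh, rfl⟩, hvh⟩ := hH ((ℝ ∙ x).mkQ v)
  rw [← map_sub] at hvh
  obtain ⟨w, hw, hws⟩ := Submodule.Quotient.norm_mk_lt ((ℝ ∙ x).mkQ (v - h)) (sub_pos.2 hrs)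
  obtain ⟨t, ht⟩ := Submodule.mem_span_singleton.1 ((Submodule.Quotient.eq _).1 hw.symm)
  refine ⟨h + ⌊t⌋ • x, add_mem hh (zsmul_mem hx _), ?_⟩
  have hrepr : v - (h + ⌊t⌋ • x) = w + Int.fract t • x := by
    rw [Int.fract, sub_smul, Int.cast_smul_eq_zsmul, ht]; abel
  rw [hrepr]
  calc ‖w + Int.fract t • x‖ ≤ ‖w‖ + ‖Int.fract t • x‖ := norm_add_le _ _
    _ ≤ s + ‖x‖ := add_le_add (by linarith) (norm_fract_smul_le t x)

end Seminormed

theorem AddSubgroup.exists_finset_card_le_finrank_isDenseUpTo {V : Type*}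
    [NormedAddCommGroup V] [NormedSpace ℝ V] [FiniteDimensional ℝ V] {G : AddSubgroup V} {R : ℝ}
    (hG : IsDenseUpTo R (G : Set V)) {E : Set V}
    (hE : Dense ((G ⊔ AddSubgroup.closure E : AddSubgroup V) : Set V)) {δ : ℝ} (hδ : 0 < δ) :
    ∃ F : Finset V, (F : Set V) ⊆ E ∧ F.card ≤ finrank ℝ V ∧
      IsDenseUpTo δ ((G ⊔ AddSubgroup.closure F : AddSubgroup V) : Set V) := by
  classical
  induction hn : finrank ℝ V using Nat.strong_induction_on generalizing V G R E δ with
  | _ n ih =>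
  by_cases hGd : Dense (G : Set V)
  · exact ⟨∅, by simp, by simp,
      (hGd.isDenseUpTo hδ).mono le_rfl (SetLike.coe_subset_coe.2 le_sup_left)⟩
  obtain ⟨e, he, x, hx, hx0, hxδ⟩ :=
    exists_mem_sup_zmultiples_ne_zero_norm_lt hG hGd hE (by positivity : 0 < δ / 4)
  -- makes `V ⧸ ℝ ∙ x` a normed group
  have : IsClosed ((ℝ ∙ x : Submodule ℝ V) : Set V) := Submodule.closed_of_finiteDimensional _
  set π := (ℝ ∙ x).mkQ.toAddMonoidHom
  set G₁ := G ⊔ zmultiples e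
  have hrank : finrank ℝ (V ⧸ ℝ ∙ x) + 1 = n := by
    rw [← hn, ← (ℝ ∙ x).finrank_quotient_add_finrank, finrank_span_singleton hx0]
  have hG₁ : IsDenseUpTo R ((G₁.map π : AddSubgroup (V ⧸ ℝ ∙ x)) : Set (V ⧸ ℝ ∙ x)) := by
    rw [coe_map]
    exact (hG.mono le_rfl (SetLike.coe_subset_coe.2 le_sup_left)).image
      (Submodule.mkQ_surjective _) (Submodule.Quotient.norm_mk_le _)
  have hE₁ := dense_map_sup_closure_image (f := π) (G := G₁) (Submodule.mkQ_surjective _)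
    (Submodule.mkQ (ℝ ∙ x)).continuous_of_finiteDimensional
    (hE.mono (SetLike.coe_subset_coe.2 (sup_le_sup_right le_sup_left _)))
  obtain ⟨F', hF'E, hF'card, hF'⟩ := ih _ (by omega) hG₁ hE₁ (half_pos hδ) rfl
  obtain ⟨F'', hF''E, hinj, hF''⟩ := Finset.exists_subset_injOn_image_eq_of_surjOn E F' hF'E
  refine ⟨insert e F'', ?_, ?_, ?_⟩
  · simpa [Set.insert_subset_iff] using ⟨he, hF''E⟩
  · calc (insert e F'').card ≤ F''.card + 1 := Finset.card_insert_le _ _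
      _ = F'.card + 1 := by rw [← hF'', Finset.card_image_of_injOn hinj]
      _ ≤ n := by omega
  have hF'' : IsDenseUpTo (δ / 2) (π '' (G₁ ⊔ AddSubgroup.closure F'' : AddSubgroup V)) := by
    refine hF'.mono le_rfl ?_
    rw [← coe_map, map_sup G₁, AddMonoidHom.map_closure]
    exact SetLike.coe_subset_coe.2 (sup_le_sup_left (closure_mono (by simp [← hF''])) _)
  refine (hF''.of_image_mkQ_span_singleton (mem_sup_left hx)
    (by linarith : δ / 2 < 3 * δ / 4)).mono (by linarith)
    (SetLike.coe_subset_coe.2 (sup_le (sup_le le_sup_left ?_) ?_))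
  · exact zmultiples_le.2 (mem_sup_right (subset_closure (by simp)))
  · exact (closure_mono (by simp)).trans le_sup_right

/-- **Density Lemma (Lemma 6.1 of Dang–Glorieux, Lemma 8.3 in the paper).**
Let `V` be a finite-dimensional real normed vector space. For every subset `E ⊆ V`
generating a dense additive subgroup of `V`, every `δ > 0`, and every basis `b` of `V`
whose range is contained in `E`, there is a finite subset `F ⊆ E` with at most
`2 · dim V` elements such that the additive subgroup generated by `range b ∪ F` is
`δ`-dense in `V`. -/
theorem stmt0 (V : Type*) [NormedAddCommGroup V] [NormedSpace ℝ V]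
    [FiniteDimensional ℝ V]
    (E : Set V) (hE : Dense (AddSubgroup.closure E : Set V))
    (δ : ℝ) (hδ : 0 < δ)
    (ι : Type*) [Fintype ι] (b : Module.Basis ι ℝ V) (hb : Set.range b ⊆ E) :
    ∃ F : Finset V, (F : Set V) ⊆ E ∧ F.card ≤ 2 * Module.finrank ℝ V ∧
      ∀ v : V, ∃ x ∈ AddSubgroup.closure (Set.range b ∪ (F : Set V)), ‖v - x‖ ≤ δ := by
  have hbE : Dense ((AddSubgroup.closure (range b) ⊔ AddSubgroup.closure E : AddSubgroup V) :
      Set V) := by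
    rwa [← AddSubgroup.closure_union, union_eq_self_of_subset_left hb]
  obtain ⟨F, hFE, hFcard, hF⟩ :=
    AddSubgroup.exists_finset_card_le_finrank_isDenseUpTo b.isDenseUpTo_closure_range hbE hδ
  refine ⟨F, hFE, hFcard.trans (Nat.le_mul_of_pos_left _ two_pos), ?_⟩
  rwa [AddSubgroup.closure_union]
end

section
/- Let G be a connected real semisimple Lie group without compact factors, g ∈ G loxodromic, and [g⁻] the unipotent Bruhat section with domain b(g⁻). Then for all integers n ≥ 1 and all ξ in the basin of attraction b(g⁻), the cocycle satisfies β_{[g⁻]}(gⁿ, ξ) = ℒ_{[g⁻]}(g)ⁿ; i.e., the AM-valued cocycle of gⁿ is constant on the whole basin of attraction and equals the n-th power of the extended Jordan projection. -/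
theorem SemiconjBy.mul_mul_eq_mul_conj_mul {G : Type*} [Group G] {c x a : G}
    (h : SemiconjBy c x a) (u : G) : a * (c * u) = c * (x * u * x⁻¹) * x := by
  rw [← mul_assoc, ← h.eq]
  group

/-- `Nm` is `N⁻`, `hg` is `h_g`, `L` is `ℒ_{[g⁻]}(g)` and `hg * u₀` is `[g⁻](ξ)`; the second
conjunct identifies `β_{[g⁻]}(gⁿ, ξ)` with `Lⁿ` through the uniqueness of `N⁻·AM·N`. -/
theorem stmt12_general (G : Type*) [Group G]
    (N Nm AM : Subgroup G)
    (hnormNm : ∀ x ∈ AM, ∀ u ∈ Nm, x * u * x⁻¹ ∈ Nm)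
    (hUniq : ∀ u₁ ∈ Nm, ∀ x₁ ∈ AM, ∀ v₁ ∈ N, ∀ u₂ ∈ Nm, ∀ x₂ ∈ AM, ∀ v₂ ∈ N,
      u₁ * x₁ * v₁ = u₂ * x₂ * v₂ → u₁ = u₂ ∧ x₁ = x₂ ∧ v₁ = v₂)
    (g hg L : G) (hL : L ∈ AM) (hgh : g * hg = hg * L)
    (n : ℕ) (u₀ : G) (hu₀ : u₀ ∈ Nm) :
    (∃ um ∈ Nm, g ^ n * (hg * u₀) = hg * um * L ^ n) ∧
    (∀ x ∈ AM, (∃ um ∈ Nm, ∃ v ∈ N, g ^ n * (hg * u₀) = hg * um * x * v) →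
      x = L ^ n) := by
  have hLn : L ^ n ∈ AM := pow_mem hL n
  have hconj : L ^ n * u₀ * (L ^ n)⁻¹ ∈ Nm := hnormNm _ hLn _ hu₀
  have hsplit : g ^ n * (hg * u₀) = hg * (L ^ n * u₀ * (L ^ n)⁻¹) * L ^ n :=
    ((show SemiconjBy hg L g from hgh.symm).pow_right n).mul_mul_eq_mul_conj_mul u₀
  refine ⟨⟨_, hconj, hsplit⟩, ?_⟩
  rintro x hx ⟨um, hum, v, hv, hdecomp⟩
  have hcoset : um * x * v = L ^ n * u₀ * (L ^ n)⁻¹ * L ^ n * 1 := by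
    apply mul_left_cancel (a := hg)
    simpa only [mul_one, mul_assoc, hsplit] using hdecomp.symm
  exact (hUniq um hum x hx v hv _ hconj _ hLn 1 N.one_mem hcoset).2.1

/-- **The cocycle on the basin of attraction (Lemma 4.9 of the paper).**
Abstract setting: `G` plays the role of a connected real linear semisimple Lie group
of non-compact type, with subgroups `N`, `N⁻ = Nm`, `AM` satisfying: `AM` normalizes
`N⁻`, and the Bruhat-type decomposition `N⁻·AM·N` is unique (`hUniq`).  The element
`g` is loxodromic, diagonalized by `h_g` (of Bruhat coordinates `(g⁺, g⁻; e_{AM})`):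
`g·h_g = h_g·L` with `L = ℒ_{[g⁻]}(g) ∈ AM` (in fact `L ∈ M·A⁺⁺`).  A point of the
basin `b(g⁻) = h_g·N⁻·η₀` has section value `[g⁻](ξ) = h_g·u₀` with `u₀ ∈ N⁻`.
Conclusion: for every `n ≥ 1` and every point of the basin, the cocycle
`β_{[g⁻]}(gⁿ, ξ)` — the unique element `x ∈ AM` with
`gⁿ·h_g·u₀ ∈ h_g·N⁻·x·N` — equals `ℒ_{[g⁻]}(g)ⁿ = Lⁿ` (and the `N`-component is
trivial). -/
theorem stmt12 (G : Type*) [Group G]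
    (N Nm AM : Subgroup G)
    (hnormNm : ∀ x ∈ AM, ∀ u ∈ Nm, x * u * x⁻¹ ∈ Nm)
    (hUniq : ∀ u₁ ∈ Nm, ∀ x₁ ∈ AM, ∀ v₁ ∈ N, ∀ u₂ ∈ Nm, ∀ x₂ ∈ AM, ∀ v₂ ∈ N,
      u₁ * x₁ * v₁ = u₂ * x₂ * v₂ → u₁ = u₂ ∧ x₁ = x₂ ∧ v₁ = v₂)
    (g hg L : G) (hL : L ∈ AM) (hgh : g * hg = hg * L)
    (n : ℕ) (hn : 1 ≤ n) (u₀ : G) (hu₀ : u₀ ∈ Nm) :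
    (∃ um ∈ Nm, g ^ n * (hg * u₀) = hg * um * L ^ n) ∧
    (∀ x ∈ AM, (∃ um ∈ Nm, ∃ v ∈ N, g ^ n * (hg * u₀) = hg * um * x * v) →
      x = L ^ n) :=
  stmt12_general G N Nm AM hnormNm hUniq g hg L hL hgh n u₀ hu₀
end

section
/- Let G be a connected real semisimple Lie group without compact factors, g ∈ G loxodromic, n ≥ 1, and ξ ∈ b(g⁻). For any compact Bruhat sections s₀, s₁, s₂ with ξ ∈ F_{s₀}, g⁺ ∈ F_{s₁}, gⁿ·ξ ∈ F_{s₂}, the cocycle factorizes exactly as β_{s₂,s₀}(gⁿ, ξ) = ℛ_{s₁,s₂}(g; gⁿξ)⁻¹ · ℒ_{s₁}(g)ⁿ · ℛ_{s₁,s₀}(g; ξ), where ℛ_{s₁,s₂}(g; η) := 𝒯_{s₁,[g⁻]}(g⁺)·𝒯_{[g⁻],s₂}(η) is the Ratio map. -/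
/-!
Since `AM ∩ N = 1` and `AM` normalizes `N`, the `AM`-part of an element of `N·AM·N` is
well defined. This gives the cohomology relation between cocycles of two pairs of sections,
`β_{t',t}(g, ξ) = 𝒯_{s',t'}(gξ)⁻¹ · β_{s',s}(g, ξ) · 𝒯_{s,t}(ξ)`.
Applied at the fixed point `g⁺` to `s₁` and `[g⁻]` it gives `ℒ_{s₁}(g) = Ta · L · Ta⁻¹`;
applied along `gⁿ` to `[g⁻]` and `(s₀, s₂)` it gives `β_{s₂,s₀}(gⁿ, ξ) = Tb2⁻¹ · Lⁿ · Tb0`,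
because the cocycle of `[g⁻]` is `Lⁿ`. Substituting the first identity into the second
yields the factorization.
-/

section BruhatUniqueness

variable {G : Type*} [Group G] {N AM : Subgroup G}

theorem eq_of_mul_eq_mul_of_inf_eq_bot (hdisj : N ⊓ AM = ⊥) {x y u v : G}
    (hx : x ∈ AM) (hy : y ∈ AM) (hu : u ∈ N) (hv : v ∈ N) (h : x * u = y * v) :
    x = y := by
  have hyx : y⁻¹ * x = v * u⁻¹ :=
    calc y⁻¹ * x = y⁻¹ * (x * u) * u⁻¹ := by group
      _ = v * u⁻¹ := by rw [h]; group
  have hmem : y⁻¹ * x ∈ N ⊓ AM :=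
    Subgroup.mem_inf.mpr ⟨hyx ▸ mul_mem hv (inv_mem hu), mul_mem (inv_mem hy) hx⟩
  rw [hdisj, Subgroup.mem_bot, inv_mul_eq_one] at hmem
  exact hmem.symm

theorem inv_mul_mul_mem_of_normalizes (hnorm : ∀ x ∈ AM, ∀ u ∈ N, x * u * x⁻¹ ∈ N)
    {x u : G} (hx : x ∈ AM) (hu : u ∈ N) : x⁻¹ * u * x ∈ N := by
  simpa using hnorm x⁻¹ (inv_mem hx) u hu

/-- Here `σ = s(ξ)`, `σ' = s'(gξ)`, `τ = t(ξ)`, `τ' = t'(gξ)`, so that `β = β_{s',s}(g, ξ)`,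
`β' = β_{t',t}(g, ξ)`, `T = 𝒯_{s,t}(ξ)` and `T' = 𝒯_{s',t'}(gξ)`. -/
theorem cocycle_eq_transition_conj (hdisj : N ⊓ AM = ⊥)
    (hnorm : ∀ x ∈ AM, ∀ u ∈ N, x * u * x⁻¹ ∈ N)
    {g σ σ' τ τ' β β' T T' u u' w w' : G}
    (hβAM : β ∈ AM) (hβ'AM : β' ∈ AM) (hTAM : T ∈ AM) (hT'AM : T' ∈ AM)
    (hu : u ∈ N) (hu' : u' ∈ N) (hw : w ∈ N) (hw' : w' ∈ N)
    (hβ : g * σ = σ' * β * u) (hβ' : g * τ = τ' * β' * u')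
    (hT : τ = σ * w * T) (hT' : τ' = σ' * w' * T') :
    β' = T'⁻¹ * β * T := by
  have hT'β' : T' * β' ∈ AM := mul_mem hT'AM hβ'AM
  have hAMN : (β * T) * (T⁻¹ * (u * w) * T)
      = (T' * β') * ((T' * β')⁻¹ * w' * (T' * β') * u') := by
    apply mul_left_cancel (a := σ')
    calc σ' * ((β * T) * (T⁻¹ * (u * w) * T)) = σ' * β * u * w * T := by group
      _ = g * τ := by rw [← hβ, hT]; group
      _ = τ' * β' * u' := hβ'
      _ = σ' * ((T' * β') * ((T' * β')⁻¹ * w' * (T' * β') * u')) := by rw [hT']; group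
  have hAMpart : β * T = T' * β' :=
    eq_of_mul_eq_mul_of_inf_eq_bot hdisj (mul_mem hβAM hTAM) hT'β'
      (inv_mul_mul_mem_of_normalizes hnorm hTAM (mul_mem hu hw))
      (mul_mem (inv_mul_mul_mem_of_normalizes hnorm hT'β' hw') hu') hAMN
  calc β' = T'⁻¹ * (T' * β') := by group
    _ = T'⁻¹ * β * T := by rw [← hAMpart]; group

end BruhatUniqueness

/-- `ξ ↦ h * e (h⁻¹ • ξ)` is the unipotent Bruhat section with domain `h·N⁻·B`. -/
theorem mul_section_apply_of_eq {G : Type*} [Group G] {B Nm AM : Subgroup G}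
    (hAMB : AM ≤ B) {e : G ⧸ B → G} (he : ∀ u ∈ Nm, e ((u : G) : G ⧸ B) = u)
    (h : G) {u x : G} {ξ : G ⧸ B} (hu : u ∈ Nm) (hx : x ∈ AM)
    (hξ : ξ = ((h * u * x : G) : G ⧸ B)) :
    h * e (h⁻¹ • ξ) = h * u := by
  have hcoset : h⁻¹ • ξ = ((u : G) : G ⧸ B) := by
    rw [hξ, ← QuotientGroup.mk_mul_of_mem u (hAMB hx)]
    show ((h⁻¹ * (h * u * x) : G) : G ⧸ B) = _
    congr 1
    group
  rw [hcoset, he u hu]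

/-- In the notation of the paper: `Nm = N⁻`, `B = MAN`, `F = G ⧸ B`, `g⁺ = h_g·B`,
`ξ = h_g·u₀·B`, `L = ℒ_{[g⁻]}(g)`, `[g⁻](η) = h_g · e(h_g⁻¹ η)`, `Ta = 𝒯_{s₁,[g⁻]}(g⁺)`,
`Tb2 = 𝒯_{[g⁻],s₂}(gⁿξ)`, `Tb0 = 𝒯_{[g⁻],s₀}(ξ)`, `L1 = ℒ_{s₁}(g)`, `β20 = β_{s₂,s₀}(gⁿ, ξ)`. -/
theorem stmt13_general (G : Type*) [Group G]
    (B N Nm AM : Subgroup G)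
    (hAMB : AM ≤ B) (hdisj : N ⊓ AM = ⊥)
    (hnormN : ∀ x ∈ AM, ∀ u ∈ N, x * u * x⁻¹ ∈ N)
    (hnormNm : ∀ x ∈ AM, ∀ u ∈ Nm, x * u * x⁻¹ ∈ Nm)
    (e : G ⧸ B → G) (he : ∀ u ∈ Nm, e ((u : G) : G ⧸ B) = u)
    (g hg L : G) (hL : L ∈ AM) (hgh : g * hg = hg * L)
    (n : ℕ)
    (u₀ : G) (hu₀ : u₀ ∈ Nm)
    (s0 s1 s2 : G ⧸ B → G)
    (Ta Tb2 Tb0 L1 β20 : G)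
    (hTaAM : Ta ∈ AM) (hTb2AM : Tb2 ∈ AM) (hTb0AM : Tb0 ∈ AM)
    (hL1AM : L1 ∈ AM) (hβAM : β20 ∈ AM)
    -- Ta = 𝒯_{s₁,[g⁻]}(g⁺) : [g⁻](g⁺) ∈ s₁(g⁺)·N·Ta, and [g⁻](g⁺) = h_g
    (hTa : ∃ u ∈ N, hg * e ((hg⁻¹ : G) • ((hg : G) : G ⧸ B))
      = s1 ((hg : G) : G ⧸ B) * u * Ta)
    -- Tb2 = 𝒯_{[g⁻],s₂}(gⁿ·ξ) : s₂(gⁿξ) ∈ [g⁻](gⁿξ)·N·Tb2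
    (hTb2 : ∃ u ∈ N, s2 ((g ^ n) • ((hg * u₀ : G) : G ⧸ B))
      = (hg * e ((hg⁻¹ : G) • ((g ^ n) • ((hg * u₀ : G) : G ⧸ B)))) * u * Tb2)
    -- Tb0 = 𝒯_{[g⁻],s₀}(ξ) : s₀(ξ) ∈ [g⁻](ξ)·N·Tb0
    (hTb0 : ∃ u ∈ N, s0 ((hg * u₀ : G) : G ⧸ B)
      = (hg * e ((hg⁻¹ : G) • ((hg * u₀ : G) : G ⧸ B))) * u * Tb0)
    -- L1 = ℒ_{s₁}(g) = β_{s₁}(g, g⁺)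
    (hL1 : ∃ u ∈ N, g * s1 ((hg : G) : G ⧸ B)
      = s1 (g • ((hg : G) : G ⧸ B)) * L1 * u)
    -- β20 = β_{s₂,s₀}(gⁿ, ξ)
    (hβ : ∃ u ∈ N, g ^ n * s0 ((hg * u₀ : G) : G ⧸ B)
      = s2 ((g ^ n) • ((hg * u₀ : G) : G ⧸ B)) * β20 * u) :
    β20 = (Ta * Tb2)⁻¹ * L1 ^ n * (Ta * Tb0) := by
  obtain ⟨ua, hua, hTa⟩ := hTa
  obtain ⟨u2, hu2, hTb2⟩ := hTb2
  obtain ⟨u0, hu0, hTb0⟩ := hTb0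
  obtain ⟨uL, huL, hL1⟩ := hL1
  obtain ⟨uβ, huβ, hβ⟩ := hβ
  have hgn : g ^ n * hg = hg * L ^ n := (SemiconjBy.pow_right hgh.symm n).symm
  have hgnξ : g ^ n * (hg * u₀) = hg * (L ^ n * u₀ * (L ^ n)⁻¹) * L ^ n := by
    rw [← mul_assoc, hgn]; group
  have hg_fixed : g • ((hg : G) : G ⧸ B) = hg := by
    show ((g * hg : G) : G ⧸ B) = _
    rw [hgh, QuotientGroup.mk_mul_of_mem hg (hAMB hL)]
  rw [hg_fixed] at hL1
  rw [mul_section_apply_of_eq hAMB he hg (one_mem Nm) (one_mem AM) (by simp), mul_one] at hTa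
  rw [mul_section_apply_of_eq hAMB he hg hu₀ (one_mem AM) (by simp)] at hTb0
  rw [mul_section_apply_of_eq hAMB he hg (hnormNm _ (pow_mem hL n) _ hu₀) (pow_mem hL n)
    (ξ := (g ^ n) • ((hg * u₀ : G) : G ⧸ B)) (congrArg _ hgnξ)] at hTb2
  have hJordan : L1 = Ta * L * Ta⁻¹ := by
    rw [cocycle_eq_transition_conj hdisj hnormN hL1AM hL hTaAM hTaAM huL (one_mem N) hua hua
      hL1 (by rw [hgh, mul_one]) hTa hTa]
    group
  have hcocycle : β20 = Tb2⁻¹ * L ^ n * Tb0 :=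
    cocycle_eq_transition_conj hdisj hnormN (pow_mem hL n) hβAM hTb0AM hTb2AM
      (one_mem N) huβ hu0 hu2 (by rw [mul_one, hgnξ]) hβ hTb0 hTb2
  rw [hcocycle, hJordan, conj_pow]
  group

/-- **Exact factorization of the cocycle via Ratio maps (Proposition 4.11).**
Abstract setting: `G` plays the role of a connected real linear semisimple Lie group
of non-compact type with minimal parabolic `B ⊇ N, AM`, opposite unipotent `Nm = N⁻`,
`N ⊓ AM = ⊥` and `AM` normalizing `N` and `N⁻`.  The Furstenberg boundary is
`F = G ⧸ B`; `e` inverts `u ↦ u·η₀` on `N⁻·η₀` and the unipotent Bruhat section with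
domain the basin `b(g⁻) = h_g·N⁻·η₀` is `[g⁻] : ξ ↦ h_g·e(h_g⁻¹·ξ)`.  The element `g`
is loxodromic: `g·h_g = h_g·L`, `L = ℒ_{[g⁻]}(g) ∈ AM`, with attracting point
`g⁺ = h_g·η₀` and `ξ = h_g·u₀·η₀ ∈ b(g⁻)`.  Given (compact Bruhat) sections
`s₀, s₁, s₂` with `ξ ∈ D₀`, `g⁺ ∈ D₁`, `gⁿ·ξ ∈ D₂`, the transition elements
`Ta = 𝒯_{s₁,[g⁻]}(g⁺)`, `Tb2 = 𝒯_{[g⁻],s₂}(gⁿξ)`, `Tb0 = 𝒯_{[g⁻],s₀}(ξ)`, the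
extended Jordan projection `L₁ = ℒ_{s₁}(g)`, and the cocycle `β₂₀ = β_{s₂,s₀}(gⁿ,ξ)`,
all characterized by their defining properties, satisfy
`β_{s₂,s₀}(gⁿ,ξ) = ℛ_{s₁,s₂}(g; gⁿξ)⁻¹ · ℒ_{s₁}(g)ⁿ · ℛ_{s₁,s₀}(g; ξ)` where
`ℛ_{s₁,s}(g; η) = Ta · 𝒯_{[g⁻],s}(η)`, i.e.
`β₂₀ = (Ta·Tb2)⁻¹ · L₁ⁿ · (Ta·Tb0)`. -/
theorem stmt13 (G : Type*) [Group G]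
    (B N Nm AM : Subgroup G)
    (hNB : N ≤ B) (hAMB : AM ≤ B) (hdisj : N ⊓ AM = ⊥)
    (hnormN : ∀ x ∈ AM, ∀ u ∈ N, x * u * x⁻¹ ∈ N)
    (hnormNm : ∀ x ∈ AM, ∀ u ∈ Nm, x * u * x⁻¹ ∈ Nm)
    (hUniq : ∀ u₁ ∈ Nm, ∀ x₁ ∈ AM, ∀ v₁ ∈ N, ∀ u₂ ∈ Nm, ∀ x₂ ∈ AM, ∀ v₂ ∈ N,
      u₁ * x₁ * v₁ = u₂ * x₂ * v₂ → u₁ = u₂ ∧ x₁ = x₂ ∧ v₁ = v₂)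
    (e : G ⧸ B → G) (he : ∀ u ∈ Nm, e ((u : G) : G ⧸ B) = u)
    (g hg L : G) (hL : L ∈ AM) (hgh : g * hg = hg * L)
    (n : ℕ) (hn : 1 ≤ n)
    (u₀ : G) (hu₀ : u₀ ∈ Nm)
    (D0 D1 D2 : Set (G ⧸ B)) (s0 s1 s2 : G ⧸ B → G)
    (hs0 : ∀ η ∈ D0, ((s0 η : G) : G ⧸ B) = η)
    (hs1 : ∀ η ∈ D1, ((s1 η : G) : G ⧸ B) = η)
    (hs2 : ∀ η ∈ D2, ((s2 η : G) : G ⧸ B) = η)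
    (hξ0 : ((hg * u₀ : G) : G ⧸ B) ∈ D0)
    (hg1 : ((hg : G) : G ⧸ B) ∈ D1)
    (hξ2 : (g ^ n) • ((hg * u₀ : G) : G ⧸ B) ∈ D2)
    (Ta Tb2 Tb0 L1 β20 : G)
    (hTaAM : Ta ∈ AM) (hTb2AM : Tb2 ∈ AM) (hTb0AM : Tb0 ∈ AM)
    (hL1AM : L1 ∈ AM) (hβAM : β20 ∈ AM)
    -- Ta = 𝒯_{s₁,[g⁻]}(g⁺) : [g⁻](g⁺) ∈ s₁(g⁺)·N·Ta, and [g⁻](g⁺) = h_g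
    (hTa : ∃ u ∈ N, hg * e ((hg⁻¹ : G) • ((hg : G) : G ⧸ B))
      = s1 ((hg : G) : G ⧸ B) * u * Ta)
    -- Tb2 = 𝒯_{[g⁻],s₂}(gⁿ·ξ) : s₂(gⁿξ) ∈ [g⁻](gⁿξ)·N·Tb2
    (hTb2 : ∃ u ∈ N, s2 ((g ^ n) • ((hg * u₀ : G) : G ⧸ B))
      = (hg * e ((hg⁻¹ : G) • ((g ^ n) • ((hg * u₀ : G) : G ⧸ B)))) * u * Tb2)
    -- Tb0 = 𝒯_{[g⁻],s₀}(ξ) : s₀(ξ) ∈ [g⁻](ξ)·N·Tb0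
    (hTb0 : ∃ u ∈ N, s0 ((hg * u₀ : G) : G ⧸ B)
      = (hg * e ((hg⁻¹ : G) • ((hg * u₀ : G) : G ⧸ B))) * u * Tb0)
    -- L1 = ℒ_{s₁}(g) = β_{s₁}(g, g⁺)
    (hL1 : ∃ u ∈ N, g * s1 ((hg : G) : G ⧸ B)
      = s1 (g • ((hg : G) : G ⧸ B)) * L1 * u)
    -- β20 = β_{s₂,s₀}(gⁿ, ξ)
    (hβ : ∃ u ∈ N, g ^ n * s0 ((hg * u₀ : G) : G ⧸ B)
      = s2 ((g ^ n) • ((hg * u₀ : G) : G ⧸ B)) * β20 * u) :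
    β20 = (Ta * Tb2)⁻¹ * L1 ^ n * (Ta * Tb0) :=
  stmt13_general G B N Nm AM hAMB hdisj hnormN hnormNm e he g hg L hL hgh n u₀ hu₀ s0 s1 s2 Ta Tb2
    Tb0 L1 β20 hTaAM hTb2AM hTb0AM hL1AM hβAM hTa hTb2 hTb0 hL1 hβ
end

section
/- Let G be a connected real semisimple Lie group without compact factors and Γ a Zariski dense discrete subgroup. Let M_Γ ⊴ M be the sign group of Γ (a closed normal finite-index subgroup of M containing M₀). Define Ω̃_{[m]} for [m] ∈ M/M_Γ via the Guivarc'h–Raugi partition L_G(Γ) = ⊔_{[m]} L_{[m]}(Γ) of the preimage in K of the limit set. Then: (a) the sets Ω̃_{[m]} are left Γ-invariant, right A·M_Γ-invariant, and partition Ω̃_G; (b) Ω̃_{[m]} = Ω̃_{[e]}·m for every m ∈ M; (c) for every θ ∈ 𝔞⁺ and every [m], the flows (Ω_{[m]}, φ_θ^t) and (Ω_{[e]}, φ_θ^t) given by right translation by exp(tθ) are topologically conjugate (via right multiplication by m, which commutes with right multiplication by A). -/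
/-!
Everything is inherited from the Guivarc'h–Raugi pieces through the Iwasawa factorisation
`x = k·b` with `k ∈ K`, `b ∈ AN`. Since `A` normalises `N`, `AN` is a subgroup, so each
`L·A·N` is right `A`-invariant; since `M` centralises `A` and normalises `N`, it normalises
`AN`, whence `(L·AN)·m = (L·m)·AN`. This transports `L_{[m]} = L_{[e]}·m` and the right
`M_Γ`-invariance of the pieces to `Ω̃_{[m]}`, and uniqueness of the `K`-factor transports
their disjointness.
-/

open scoped Pointwise

section

variable {G : Type*} [Group G]

namespace Subgroup

theorem le_normalizer_of_conj_mem {H N : Subgroup G}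
    (h : ∀ g ∈ H, ∀ v ∈ N, g * v * g⁻¹ ∈ N) : H ≤ normalizer (N : Set G) := by
  intro g hg
  refine mem_normalizer_iff.2 fun v => ⟨h g hg v, fun hv => ?_⟩
  simpa [mul_assoc] using h g⁻¹ (inv_mem hg) _ hv

theorem le_normalizer_sup_of_le_centralizer {H A N : Subgroup G} (hA : H ≤ centralizer A)
    (hN : H ≤ normalizer (N : Set G)) : H ≤ normalizer ((A ⊔ N : Subgroup G) : Set G) :=
  fun _ hg => normalizer_inf_normalizer_le_normalizer_sup A N
    ⟨centralizer_le_normalizer _ (hA hg), hN hg⟩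

end Subgroup

namespace Set

theorem mul_mul_coe_eq_mul_coe_sup {A N : Subgroup G} (hA : A ≤ Subgroup.normalizer (N : Set G))
    (s : Set G) : s * A * N = s * ↑(A ⊔ N) := by
  rw [mul_assoc, Subgroup.coe_mul_of_left_le_normalizer_right A N hA]

theorem mul_mem_mul_coe {B : Subgroup G} {s : Set G} {x b : G} (hx : x ∈ s * B)
    (hb : b ∈ B) : x * b ∈ s * B := by
  obtain ⟨k, hk, b', hb', rfl⟩ := hx
  exact ⟨k, hk, b' * b, B.mul_mem hb' hb, (mul_assoc ..).symm⟩

theorem image_mul_right_mul_coe {B : Subgroup G} {m : G}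
    (hm : m ∈ Subgroup.normalizer (B : Set G)) (s : Set G) :
    (· * m) '' (s * B) = (· * m) '' s * B := by
  ext x
  simp only [mem_image, mem_mul, SetLike.mem_coe]
  constructor
  · rintro ⟨_, ⟨k, hk, b, hb, rfl⟩, rfl⟩
    exact ⟨k * m, ⟨k, hk, rfl⟩, m⁻¹ * b * m, (Subgroup.mem_normalizer_iff''.1 hm b).1 hb,
      by group⟩
  · rintro ⟨_, ⟨k, hk, rfl⟩, b, hb, rfl⟩
    exact ⟨k * (m * b * m⁻¹), ⟨k, hk, _, (Subgroup.mem_normalizer_iff.1 hm b).1 hb, rfl⟩,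
      by group⟩

theorem image_mul_right_eq_self {H : Subgroup G} {s : Set G}
    (hs : ∀ x ∈ s, ∀ h ∈ H, x * h ∈ s) {h : G} (hh : h ∈ H) : (· * h) '' s = s :=
  subset_antisymm (image_subset_iff.2 fun x hx => hs x hx h hh) fun x hx =>
    ⟨x * h⁻¹, hs x hx _ (inv_mem hh), inv_mul_cancel_right x h⟩

theorem image_mul_right_image_mul_right_of_conj {s : Set G} {m c : G}
    (hs : (· * (m * c * m⁻¹)) '' s = s) : (· * c) '' ((· * m) '' s) = (· * m) '' s := by
  conv_rhs => rw [← hs]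
  simp only [image_image]
  congr 1
  funext x
  group

theorem disjoint_mul_of_unique_left_factor {K B s t : Set G}
    (huniq : ∀ k₁ ∈ K, ∀ k₂ ∈ K, ∀ b₁ ∈ B, ∀ b₂ ∈ B, k₁ * b₁ = k₂ * b₂ → k₁ = k₂)
    (hs : s ⊆ K) (ht : t ⊆ K) (hst : Disjoint s t) : Disjoint (s * B) (t * B) := by
  rw [disjoint_left]
  rintro _ ⟨k, hk, b, hb, rfl⟩ ⟨k', hk', b', hb', heq⟩
  obtain rfl := huniq k' (ht hk') k (hs hk) b' hb' b hb heq
  exact disjoint_left.1 hst hk hk'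

end Set

end

theorem stmt17_general (G : Type*) [Group G]
    (Γ K A N M MΓ : Subgroup G)
    (hMΓM : MΓ ≤ M)
    (hnormal : ∀ m ∈ M, ∀ c ∈ MΓ, m * c * m⁻¹ ∈ MΓ)
    (hAMcomm : ∀ a ∈ A, ∀ m ∈ M, a * m = m * a)
    (hAN : ∀ a ∈ A, ∀ v ∈ N, a * v * a⁻¹ ∈ N)
    (hMN : ∀ m ∈ M, ∀ v ∈ N, m * v * m⁻¹ ∈ N)
    (LG : Set G) (Lpart : G → Set G)
    (hpartK : ∀ m ∈ M, Lpart m ⊆ (K : Set G))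
    (hcover : LG = ⋃ m ∈ (M : Set G), Lpart m)
    (htrans : ∀ m ∈ M, Lpart m = (fun x => x * m) '' Lpart 1)
    (hMΓinv : ∀ c ∈ MΓ, (fun x => x * c) '' Lpart 1 = Lpart 1)
    (hdisjL : ∀ m ∈ M, ∀ m' ∈ M, (Lpart m ∩ Lpart m').Nonempty → m' * m⁻¹ ∈ MΓ)
    (hΓL : ∀ m ∈ M, ∀ γ ∈ Γ,
      (fun x => γ * x) '' (Lpart m * (A : Set G) * (N : Set G))
        ⊆ Lpart m * (A : Set G) * (N : Set G))
    (hKAN : ∀ k₁ ∈ K, ∀ k₂ ∈ K, ∀ b₁ ∈ (A : Set G) * (N : Set G),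
      ∀ b₂ ∈ (A : Set G) * (N : Set G), k₁ * b₁ = k₂ * b₂ → k₁ = k₂)
    (ΩG : Set G)
    (hΩΓ : ∀ γ ∈ Γ, ∀ x ∈ ΩG, γ * x ∈ ΩG)
    (hΩAM : ∀ x ∈ ΩG, ∀ a ∈ A, ∀ m ∈ M, x * a * m ∈ ΩG)
    (hΩL : ΩG ⊆ LG * (A : Set G) * (N : Set G)) :
    -- (a) left Γ-invariance
    (∀ m ∈ M, ∀ γ ∈ Γ, ∀ x ∈ (Lpart m * (A : Set G) * (N : Set G)) ∩ ΩG,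
        γ * x ∈ (Lpart m * (A : Set G) * (N : Set G)) ∩ ΩG) ∧
    -- (a) right A·MΓ-invariance
    (∀ m ∈ M, ∀ x ∈ (Lpart m * (A : Set G) * (N : Set G)) ∩ ΩG, ∀ a ∈ A, ∀ c ∈ MΓ,
        x * a * c ∈ (Lpart m * (A : Set G) * (N : Set G)) ∩ ΩG) ∧
    -- (a) the pieces cover Ω̃_G ...
    ((⋃ m ∈ (M : Set G), (Lpart m * (A : Set G) * (N : Set G)) ∩ ΩG) = ΩG) ∧
    -- ... and pieces of distinct classes in M/MΓ are disjoint
    (∀ m ∈ M, ∀ m' ∈ M, m' * m⁻¹ ∉ MΓ →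
        Disjoint ((Lpart m * (A : Set G) * (N : Set G)) ∩ ΩG)
          ((Lpart m' * (A : Set G) * (N : Set G)) ∩ ΩG)) ∧
    -- (b) Ω̃_{[m]} = Ω̃_{[e]}·m
    (∀ m ∈ M, (Lpart m * (A : Set G) * (N : Set G)) ∩ ΩG
        = (fun x => x * m) '' ((Lpart 1 * (A : Set G) * (N : Set G)) ∩ ΩG)) ∧
    -- (c) right multiplication by m conjugates the diagonal flows
    (∀ m ∈ M, Set.BijOn (fun x => x * m)
        ((Lpart 1 * (A : Set G) * (N : Set G)) ∩ ΩG)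
        ((Lpart m * (A : Set G) * (N : Set G)) ∩ ΩG)) ∧
    (∀ m ∈ M, ∀ a ∈ A, ∀ x : G, x * m * a = x * a * m) := by
  have hAN' : A ≤ Subgroup.normalizer (N : Set G) := Subgroup.le_normalizer_of_conj_mem hAN
  have hMB : M ≤ Subgroup.normalizer ((A ⊔ N : Subgroup G) : Set G) :=
    Subgroup.le_normalizer_sup_of_le_centralizer
      (fun m hm => Subgroup.mem_centralizer_iff.2 fun a ha => hAMcomm a ha m hm)
      (Subgroup.le_normalizer_of_conj_mem hMN)
  simp only [Set.mul_mul_coe_eq_mul_coe_sup hAN'] at hΓL hΩL ⊢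
  rw [← Subgroup.coe_mul_of_left_le_normalizer_right A N hAN'] at hKAN
  have hLpartMΓ : ∀ m ∈ M, ∀ c ∈ MΓ, (· * c) '' Lpart m = Lpart m := by
    intro m hm c hc
    rw [htrans m hm]
    exact Set.image_mul_right_image_mul_right_of_conj (hMΓinv _ (hnormal m hm c hc))
  have hb : ∀ m ∈ M, Lpart m * ↑(A ⊔ N) ∩ ΩG = (· * m) '' (Lpart 1 * ↑(A ⊔ N) ∩ ΩG) := by
    intro m hm
    rw [Set.image_inter (mul_left_injective m), Set.image_mul_right_mul_coe (hMB hm),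
      ← htrans m hm,
      Set.image_mul_right_eq_self (fun x hx m hm => by simpa using hΩAM x hx 1 A.one_mem m hm) hm]
  refine ⟨?_, ?_, ?_, ?_, hb, fun m hm => ?_, fun m hm a ha x => ?_⟩
  · rintro m hm γ hγ x ⟨hxS, hxΩ⟩
    exact ⟨hΓL m hm γ hγ ⟨x, hxS, rfl⟩, hΩΓ γ hγ x hxΩ⟩
  · rintro m hm x ⟨hxS, hxΩ⟩ a ha c hc
    refine ⟨?_, hΩAM x hxΩ a ha c (hMΓM hc)⟩
    rw [← hLpartMΓ m hm c hc, ← Set.image_mul_right_mul_coe (hMB (hMΓM hc))]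
    exact ⟨_, Set.mul_mem_mul_coe hxS (Subgroup.mem_sup_left ha), rfl⟩
  · rw [← Set.iUnion₂_inter, Set.inter_eq_right, ← Set.iUnion₂_mul, ← hcover]
    exact hΩL
  · intro m hm m' hm' hne
    refine Disjoint.mono Set.inter_subset_left Set.inter_subset_left
      (Set.disjoint_mul_of_unique_left_factor hKAN (hpartK m hm) (hpartK m' hm') ?_)
    exact Set.disjoint_iff_inter_eq_empty.2
      (Set.not_nonempty_iff_eq_empty.1 (mt (hdisjL m hm m' hm') hne))
  · rw [hb m hm]
    exact (mul_left_injective m).injOn.bijOn_image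
  · rw [mul_assoc, mul_assoc, hAMcomm a ha m hm]

/-- **Partition of `Ω̃_G` into conjugated invariant pieces (Proposition 5.12 /
Theorem 1.3(a)(b)(c)).**  Abstract setting: `G` plays the role of a connected real
linear semisimple Lie group of non-compact type, with subgroups `Γ` (Zariski dense
discrete), `K` (maximal compact), `A`, `N`, `M = Z_K(A)`, `M₀` (identity component of
`M`) and the sign group `MΓ`, a closed normal finite-index subgroup of `M` containing
`M₀`.  `LG ⊆ K` is the preimage `L_G(Γ)` of the limit set, and `Lpart m` the
Guivarc'h–Raugi piece `L_{[m]}(Γ)` of its partition (Theorem 5.10): the pieces cover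
`LG`, satisfy `L_{[m]} = L_{[e]}·m`, are right `MΓ`-invariant and pairwise disjoint
modulo `MΓ`; `hΓL` records their `Γ`-invariance, `hKAN` the uniqueness of the
`K·(AN)` Iwasawa decomposition.  `ΩG = Ω̃_G` is left `Γ`-invariant and right
`AM`-invariant with `ΩG ⊆ LG·A·N`.  Setting `Ω̃_{[m]} := (Lpart m·A·N) ∩ ΩG`,
the conclusions are: (a) each `Ω̃_{[m]}` is left `Γ`-invariant and right
`A·MΓ`-invariant, the `Ω̃_{[m]}` cover `ΩG` and pieces with distinct classes
`[m] ∈ M/MΓ` are disjoint; (b) `Ω̃_{[m]} = Ω̃_{[e]}·m`; (c) right multiplication by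
`m` is a bijection `Ω̃_{[e]} → Ω̃_{[m]}` commuting with the right translation flows by
elements of `A` — so the flows `(Ω_{[m]}, φ_θ^t)` and `(Ω_{[e]}, φ_θ^t)` are
conjugated. -/
theorem stmt17 (G : Type*) [Group G]
    (Γ K A N M M₀ MΓ : Subgroup G)
    (hM₀ : M₀ ≤ MΓ) (hMΓM : MΓ ≤ M)
    (hnormal : ∀ m ∈ M, ∀ c ∈ MΓ, m * c * m⁻¹ ∈ MΓ)
    (hfin : (MΓ.subgroupOf M).FiniteIndex)
    (hAMcomm : ∀ a ∈ A, ∀ m ∈ M, a * m = m * a)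
    (hAN : ∀ a ∈ A, ∀ v ∈ N, a * v * a⁻¹ ∈ N)
    (hMN : ∀ m ∈ M, ∀ v ∈ N, m * v * m⁻¹ ∈ N)
    (LG : Set G) (Lpart : G → Set G)
    (hLK : LG ⊆ (K : Set G))
    (hpartK : ∀ m ∈ M, Lpart m ⊆ (K : Set G))
    (hcover : LG = ⋃ m ∈ (M : Set G), Lpart m)
    (htrans : ∀ m ∈ M, Lpart m = (fun x => x * m) '' Lpart 1)
    (hMΓinv : ∀ c ∈ MΓ, (fun x => x * c) '' Lpart 1 = Lpart 1)
    (hdisjL : ∀ m ∈ M, ∀ m' ∈ M, (Lpart m ∩ Lpart m').Nonempty → m' * m⁻¹ ∈ MΓ)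
    (hΓL : ∀ m ∈ M, ∀ γ ∈ Γ,
      (fun x => γ * x) '' (Lpart m * (A : Set G) * (N : Set G))
        ⊆ Lpart m * (A : Set G) * (N : Set G))
    (hKAN : ∀ k₁ ∈ K, ∀ k₂ ∈ K, ∀ b₁ ∈ (A : Set G) * (N : Set G),
      ∀ b₂ ∈ (A : Set G) * (N : Set G), k₁ * b₁ = k₂ * b₂ → k₁ = k₂)
    (ΩG : Set G)
    (hΩΓ : ∀ γ ∈ Γ, ∀ x ∈ ΩG, γ * x ∈ ΩG)
    (hΩAM : ∀ x ∈ ΩG, ∀ a ∈ A, ∀ m ∈ M, x * a * m ∈ ΩG)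
    (hΩL : ΩG ⊆ LG * (A : Set G) * (N : Set G)) :
    -- (a) left Γ-invariance
    (∀ m ∈ M, ∀ γ ∈ Γ, ∀ x ∈ (Lpart m * (A : Set G) * (N : Set G)) ∩ ΩG,
        γ * x ∈ (Lpart m * (A : Set G) * (N : Set G)) ∩ ΩG) ∧
    -- (a) right A·MΓ-invariance
    (∀ m ∈ M, ∀ x ∈ (Lpart m * (A : Set G) * (N : Set G)) ∩ ΩG, ∀ a ∈ A, ∀ c ∈ MΓ,
        x * a * c ∈ (Lpart m * (A : Set G) * (N : Set G)) ∩ ΩG) ∧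
    -- (a) the pieces cover Ω̃_G ...
    ((⋃ m ∈ (M : Set G), (Lpart m * (A : Set G) * (N : Set G)) ∩ ΩG) = ΩG) ∧
    -- ... and pieces of distinct classes in M/MΓ are disjoint
    (∀ m ∈ M, ∀ m' ∈ M, m' * m⁻¹ ∉ MΓ →
        Disjoint ((Lpart m * (A : Set G) * (N : Set G)) ∩ ΩG)
          ((Lpart m' * (A : Set G) * (N : Set G)) ∩ ΩG)) ∧
    -- (b) Ω̃_{[m]} = Ω̃_{[e]}·m
    (∀ m ∈ M, (Lpart m * (A : Set G) * (N : Set G)) ∩ ΩG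
        = (fun x => x * m) '' ((Lpart 1 * (A : Set G) * (N : Set G)) ∩ ΩG)) ∧
    -- (c) right multiplication by m conjugates the diagonal flows
    (∀ m ∈ M, Set.BijOn (fun x => x * m)
        ((Lpart 1 * (A : Set G) * (N : Set G)) ∩ ΩG)
        ((Lpart m * (A : Set G) * (N : Set G)) ∩ ΩG)) ∧
    (∀ m ∈ M, ∀ a ∈ A, ∀ x : G, x * m * a = x * a * m) :=
  stmt17_general G Γ K A N M MΓ hMΓM hnormal hAMcomm hAN hMN LG Lpart hpartK hcover htrans hMΓinv
    hdisjL hΓL hKAN ΩG hΩΓ hΩAM hΩL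
end
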